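/- Let x_1, …, x_n be real numbers, S_F = diag(e^{i x_1}, …, e^{i x_n}) ∈ ℂ^{n×n}, M ∈ ℝ^{n×m} a real matrix, and B = [M | −S_F M] ∈ ℂ^{n×2m} the concatenated matrix. Assume the eigenspace of BᴴB corresponding to its smallest eigenvalue is one-dimensional, and let γ = [α; β] ∈ ℂ^{2m} be a unit vector minimizing ‖Bv‖_2 over all unit vectors v ∈ ℂ^{2m}, with α, β ∈ ℂ^m. Let y_1, …, y_m be distinct real numbers, define p_b(x) = Σ_{j=1}^m α_j ∏_{k≠j}(x − y_k) and q_b(x) = Σ_{j=1}^m β_j ∏_{k≠j}(x − y_k), and assume p_b and q_b have no common complex root. Then q_b(x) ≠ 0 for every real x and |p_b(x)/q_b(x)| = 1 for every real x. -/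

import Mathlib

/-!
A unit minimizer `γ = [α; β]` of `‖B v‖` is an eigenvector of `Bᴴ B` for its smallest eigenvalue.
Since `M` is real and `|e^{i x_k}| = 1`, the vector `γ' = [conj β; conj α]` satisfies
`(B γ')_k = -e^{i x_k} conj (B γ)_k`, so it is a unit minimizer as well; one-dimensionality of the
eigenspace forces `γ' = c γ`, i.e. `conj β = c α` and `conj α = c β`. On the real axis this reads
`conj q_b = c p_b` and `conj p_b = c q_b`, whence `|c| = 1`, `|p_b| = |q_b|`, and a real zero of
`q_b` would be a common zero of `p_b` and `q_b`.
-/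

open Matrix ComplexOrder

namespace Matrix

variable {ι κ : Type*} [Fintype ι]

lemma star_dotProduct_self_eq_sum_norm_sq (u : ι → ℂ) :
    star u ⬝ᵥ u = ((∑ i, ‖u i‖ ^ 2 : ℝ) : ℂ) := by
  simp [dotProduct, Complex.sq_norm, Complex.normSq_eq_conj_mul_self]

lemma sum_norm_sq_smul (c : ℂ) (u : ι → ℂ) :
    ∑ i, ‖(c • u) i‖ ^ 2 = ‖c‖ ^ 2 * ∑ i, ‖u i‖ ^ 2 := by
  simp [Finset.mul_sum, mul_pow]

section RayleighQuotient

variable [Fintype κ]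

lemma star_dotProduct_conjTranspose_mul_self_mulVec (B : Matrix κ ι ℂ) (v : ι → ℂ) :
    star v ⬝ᵥ (Bᴴ * B) *ᵥ v = ((∑ k, ‖(B *ᵥ v) k‖ ^ 2 : ℝ) : ℂ) := by
  rw [← mulVec_mulVec, dotProduct_mulVec, vecMul_conjTranspose, star_star,
    star_dotProduct_self_eq_sum_norm_sq]

lemma mul_sum_norm_sq_le_of_isMinOn_sphere (B : Matrix κ ι ℂ) {γ : ι → ℂ}
    (hγmin : ∀ v : ι → ℂ, ∑ i, ‖v i‖ ^ 2 = 1 →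
      ∑ k, ‖(B *ᵥ γ) k‖ ^ 2 ≤ ∑ k, ‖(B *ᵥ v) k‖ ^ 2) (v : ι → ℂ) :
    (∑ k, ‖(B *ᵥ γ) k‖ ^ 2) * ∑ i, ‖v i‖ ^ 2 ≤ ∑ k, ‖(B *ᵥ v) k‖ ^ 2 := by
  set N := ∑ i, ‖v i‖ ^ 2
  rcases (show 0 ≤ N by positivity).eq_or_lt with hN | hN
  · rw [← hN, mul_zero]; positivity
  set c : ℂ := (((Real.sqrt N)⁻¹ : ℝ) : ℂ)
  have hc : ‖c‖ ^ 2 * N = 1 := by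
    rw [Complex.norm_real, Real.norm_eq_abs, sq_abs, inv_pow, Real.sq_sqrt hN.le,
      inv_mul_cancel₀ hN.ne']
  have h := hγmin (c • v) (by rw [sum_norm_sq_smul, hc])
  rw [mulVec_smul, sum_norm_sq_smul] at h
  calc (∑ k, ‖(B *ᵥ γ) k‖ ^ 2) * N
      ≤ ‖c‖ ^ 2 * (∑ k, ‖(B *ᵥ v) k‖ ^ 2) * N := by gcongr
    _ = ∑ k, ‖(B *ᵥ v) k‖ ^ 2 := by rw [mul_comm (‖c‖ ^ 2), mul_assoc, hc, mul_one]

variable [DecidableEq ι] (B : Matrix κ ι ℂ) {μ : ℝ}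

lemma star_dotProduct_conjTranspose_mul_self_sub_smul_one_mulVec (v : ι → ℂ) :
    star v ⬝ᵥ (Bᴴ * B - (μ : ℂ) • 1) *ᵥ v =
      ((∑ k, ‖(B *ᵥ v) k‖ ^ 2 - μ * ∑ i, ‖v i‖ ^ 2 : ℝ) : ℂ) := by
  rw [sub_mulVec, dotProduct_sub, star_dotProduct_conjTranspose_mul_self_mulVec, smul_mulVec,
    one_mulVec, dotProduct_smul, star_dotProduct_self_eq_sum_norm_sq, smul_eq_mul,
    ← Complex.ofReal_mul, ← Complex.ofReal_sub]

variable (hlow : ∀ v : ι → ℂ, μ * ∑ i, ‖v i‖ ^ 2 ≤ ∑ k, ‖(B *ᵥ v) k‖ ^ 2)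
include hlow

lemma posSemidef_conjTranspose_mul_self_sub_smul_one : (Bᴴ * B - (μ : ℂ) • 1).PosSemidef := by
  refine posSemidef_iff_dotProduct_mulVec.2 ⟨?_, fun v => ?_⟩
  · exact (isHermitian_conjTranspose_mul_self B).sub
      (isHermitian_one.smul (by simp [IsSelfAdjoint, Complex.conj_ofReal]))
  · rw [star_dotProduct_conjTranspose_mul_self_sub_smul_one_mulVec, Complex.zero_le_real,
      sub_nonneg]
    exact hlow v

lemma mem_eigenspace_conjTranspose_mul_self {v : ι → ℂ}
    (hv : ∑ k, ‖(B *ᵥ v) k‖ ^ 2 = μ * ∑ i, ‖v i‖ ^ 2) :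
    v ∈ Module.End.eigenspace (toLin' (Bᴴ * B)) (μ : ℂ) := by
  have hker := ((posSemidef_conjTranspose_mul_self_sub_smul_one B hlow).dotProduct_mulVec_zero_iff
    v).1 (by rw [star_dotProduct_conjTranspose_mul_self_sub_smul_one_mulVec, hv, sub_self,
      Complex.ofReal_zero])
  rwa [sub_mulVec, smul_mulVec, one_mulVec, sub_eq_zero, ← toLin'_apply,
    ← Module.End.mem_eigenspace_iff] at hker

lemma le_of_hasEigenvalue_conjTranspose_mul_self {ν : ℝ}
    (hν : Module.End.HasEigenvalue (toLin' (Bᴴ * B)) (ν : ℂ)) : μ ≤ ν := by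
  obtain ⟨u, hu, hu0⟩ := hν.exists_hasEigenvector
  rw [Module.End.mem_eigenspace_iff, toLin'_apply] at hu
  have hquad : ∑ k, ‖(B *ᵥ u) k‖ ^ 2 = ν * ∑ i, ‖u i‖ ^ 2 := by
    have := star_dotProduct_conjTranspose_mul_self_mulVec B u
    rw [hu, dotProduct_smul, star_dotProduct_self_eq_sum_norm_sq, smul_eq_mul,
      ← Complex.ofReal_mul] at this
    exact_mod_cast this.symm
  have hpos : 0 < ∑ i, ‖u i‖ ^ 2 := by
    have := dotProduct_star_self_pos_iff.2 hu0
    rwa [star_dotProduct_self_eq_sum_norm_sq, Complex.zero_lt_real] at this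
  exact le_of_mul_le_mul_right (hquad ▸ hlow u) hpos

end RayleighQuotient

section Reflection

variable (M : Matrix κ ι ℝ) (s : κ → ℂ) (hs : ∀ k, ‖s k‖ = 1) (B : Matrix κ (ι ⊕ ι) ℂ)
  (hBl : ∀ k j, B k (Sum.inl j) = M k j) (hBr : ∀ k j, B k (Sum.inr j) = -s k * M k j)
  (α β : ι → ℂ)
include hs hBl hBr

lemma mulVec_sumElim_star_swap (k : κ) :
    (B *ᵥ Sum.elim (star β) (star α)) k = -s k * star ((B *ᵥ Sum.elim α β) k) := by
  have hss : starRingEnd ℂ (s k) * s k = 1 := by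
    rw [← Complex.normSq_eq_conj_mul_self, Complex.normSq_eq_norm_sq, hs k]
    norm_num
  simp only [mulVec, dotProduct, Fintype.sum_sum_type, Sum.elim_inl, Sum.elim_inr, hBl, hBr,
    star_add, star_sum, star_mul', star_neg, Complex.star_def, Complex.conj_ofReal, Pi.star_apply]
  simp_rw [mul_assoc, ← Finset.mul_sum]
  linear_combination (-∑ j, (M k j : ℂ) * (starRingEnd ℂ) (β j)) * hss

lemma sum_norm_sq_mulVec_sumElim_star_swap [Fintype κ] :
    ∑ k, ‖(B *ᵥ Sum.elim (star β) (star α)) k‖ ^ 2 = ∑ k, ‖(B *ᵥ Sum.elim α β) k‖ ^ 2 := by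
  simp [mulVec_sumElim_star_swap M s hs B hBl hBr, hs]

end Reflection

end Matrix

lemma sum_norm_sq_sumElim_star_swap {ι : Type*} [Fintype ι] (α β : ι → ℂ) :
    ∑ i, ‖Sum.elim (star β) (star α) i‖ ^ 2 = ∑ i, ‖Sum.elim α β i‖ ^ 2 := by
  simp [Fintype.sum_sum_type, add_comm]

section Barycentric

variable {ι : Type*} [Fintype ι] [DecidableEq ι]

/-- The numerator `Σⱼ aⱼ ∏_{k ≠ j} (z - yₖ)` of the barycentric form `Σⱼ aⱼ / (z - yⱼ)`. -/
def barycentricPoly (y : ι → ℝ) (a : ι → ℂ) (z : ℂ) : ℂ :=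
  ∑ j, a j * ∏ k ∈ Finset.univ.erase j, (z - y k)

lemma star_barycentricPoly_ofReal (y : ι → ℝ) (a : ι → ℂ) (t : ℝ) :
    star (barycentricPoly y a t) = barycentricPoly y (star a) t := by
  simp [barycentricPoly, star_sum, star_prod, Complex.conj_ofReal, mul_comm]

lemma barycentricPoly_smul (y : ι → ℝ) (c : ℂ) (a : ι → ℂ) (z : ℂ) :
    barycentricPoly y (c • a) z = c * barycentricPoly y a z := by
  simp [barycentricPoly, Finset.mul_sum, mul_assoc]

end Barycentric

lemma norm_div_eq_one_of_star_eq_mul {p q c : ℂ} (hq : star q = c * p) (hp : star p = c * q)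
    (hpq : ¬(p = 0 ∧ q = 0)) : q ≠ 0 ∧ ‖p / q‖ = 1 := by
  have hnq : ‖q‖ = ‖c‖ * ‖p‖ := by rw [← norm_star, hq, norm_mul]
  have hnp : ‖p‖ = ‖c‖ * ‖q‖ := by rw [← norm_star, hp, norm_mul]
  have hq0 : q ≠ 0 := fun h => hpq ⟨by simpa [h] using hnp, h⟩
  have hc : ‖c‖ = 1 := by
    have h : ‖q‖ * (‖c‖ - 1) * (‖c‖ + 1) = 0 := by linear_combination -‖c‖ * hnp - hnq
    rcases mul_eq_zero.1 h with h | h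
    · rcases mul_eq_zero.1 h with h | h
      · exact absurd (norm_eq_zero.1 h) hq0
      · linarith
    · linarith [norm_nonneg c]
  exact ⟨hq0, by rw [norm_div, hnp, hc, one_mul, div_self (norm_ne_zero_iff.2 hq0)]⟩

theorem stmt_5 (m n : ℕ)
    (x : Fin n → ℝ)
    (M : Matrix (Fin n) (Fin m) ℝ)
    (B : Matrix (Fin n) (Fin m ⊕ Fin m) ℂ)
    (hBl : ∀ k j, B k (Sum.inl j) = ((M k j : ℝ) : ℂ))
    (hBr : ∀ k j, B k (Sum.inr j) = -Complex.exp (Complex.I * (x k : ℝ)) * ((M k j : ℝ) : ℂ))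
    -- non-degeneracy: the eigenspace of BᴴB for its smallest eigenvalue is one-dimensional
    (hnd : ∃ lam : ℝ,
      Module.End.HasEigenvalue (Matrix.toLin' (Bᴴ * B)) (lam : ℂ) ∧
      (∀ ν : ℝ, Module.End.HasEigenvalue (Matrix.toLin' (Bᴴ * B)) (ν : ℂ) → lam ≤ ν) ∧
      Module.finrank ℂ (Module.End.eigenspace (Matrix.toLin' (Bᴴ * B)) (lam : ℂ)) = 1)
    (α β : Fin m → ℂ) (γ : Fin m ⊕ Fin m → ℂ) (hγ : γ = Sum.elim α β)
    (hγunit : ∑ i, ‖γ i‖ ^ 2 = 1)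
    (hγmin : ∀ v : Fin m ⊕ Fin m → ℂ, (∑ i, ‖v i‖ ^ 2 = 1) →
      ∑ k, ‖B.mulVec γ k‖ ^ 2 ≤ ∑ k, ‖B.mulVec v k‖ ^ 2)
    (y : Fin m → ℝ)
    (pb qb : ℂ → ℂ)
    (hpb : ∀ z, pb z = ∑ j, α j * ∏ k ∈ Finset.univ.erase j, (z - ((y k : ℝ) : ℂ)))
    (hqb : ∀ z, qb z = ∑ j, β j * ∏ k ∈ Finset.univ.erase j, (z - ((y k : ℝ) : ℂ)))
    (hirr : ∀ z : ℂ, ¬(pb z = 0 ∧ qb z = 0)) :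
    (∀ t : ℝ, qb (t : ℂ) ≠ 0) ∧
    (∀ t : ℝ, ‖pb (t : ℂ) / qb (t : ℂ)‖ = 1) := by
  set μ := ∑ k, ‖(B *ᵥ γ) k‖ ^ 2
  have hlow := mul_sum_norm_sq_le_of_isMinOn_sphere B hγmin
  have hs (k : Fin n) := Complex.norm_exp_I_mul_ofReal (x k)
  have hγ_mem := mem_eigenspace_conjTranspose_mul_self B hlow (v := γ) (by rw [hγunit, mul_one])
  have hγ'_mem := mem_eigenspace_conjTranspose_mul_self B hlow (v := Sum.elim (star β) (star α))
    (by rw [sum_norm_sq_mulVec_sumElim_star_swap M _ hs B hBl hBr, sum_norm_sq_sumElim_star_swap,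
      ← hγ, hγunit, mul_one])
  have hγ0 : γ ≠ 0 := by rintro rfl; simp at hγunit
  obtain ⟨lam, hlam, hlam_min, hrank⟩ := hnd
  obtain rfl : μ = lam := le_antisymm (le_of_hasEigenvalue_conjTranspose_mul_self B hlow hlam)
    (hlam_min μ (Module.End.hasEigenvalue_of_hasEigenvector ⟨hγ_mem, hγ0⟩))
  obtain ⟨c, hc⟩ := Submodule.mem_span_singleton.1
    (eq_span_singleton_of_mem_of_finrank_eq_one hrank hγ_mem hγ0 ▸ hγ'_mem)
  have hβ : c • α = star β := funext fun j => by simpa [hγ] using congrFun hc (Sum.inl j)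
  have hα : c • β = star α := funext fun j => by simpa [hγ] using congrFun hc (Sum.inr j)
  obtain rfl : pb = barycentricPoly y α := funext hpb
  obtain rfl : qb = barycentricPoly y β := funext hqb
  have key (t : ℝ) := norm_div_eq_one_of_star_eq_mul
    (by rw [star_barycentricPoly_ofReal, ← hβ, barycentricPoly_smul])
    (by rw [star_barycentricPoly_ofReal, ← hα, barycentricPoly_smul]) (hirr t)
  exact ⟨fun t => (key t).1, fun t => (key t).2⟩
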